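/- With Ω_n defined as above, one has the explicit kernel elements: Ω_1(ν_b) = 0, Ω_3(1 + ν_b³) = 0, and Ω_5(ν_b⁵ + 2ν_b² + ν_w) = 0. In particular, for n ∈ {1, 3, 5} the operator Ω_n is not injective on polynomials of total degree at most n (without the symmetry condition). -/

import Mathlib

open MvPolynomial

@[simp]
theorem Derivation.map_ofNat {R A M : Type*} [CommSemiring R] [CommSemiring A] [AddCommMonoid M]
    [Algebra R A] [Module A M] [Module R M] (D : Derivation R A M) (n : ℕ) [n.AtLeastTwo] :
    D (ofNat(n) : A) = 0 :=
  D.map_natCast n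

@[simp]
theorem MvPolynomial.totalDegree_ofNat {R σ : Type*} [CommSemiring R] (n : ℕ) [n.AtLeastTwo] :
    (ofNat(n) : MvPolynomial σ R).totalDegree = 0 := by
  rw [← map_ofNat C n, totalDegree_C]

namespace Stmt3

/-- The operator Ω_n := (2/3)(n + 1 + D_w − D_b) ∘ ((ν_w² + ν_b) n
    + ν_w (1 − ν_b ν_w) ∂_b + (1 − ν_b ν_w) ∂_w)
    − (ν_w (n+1) + (1 − ν_b ν_w) ∂_b) ∘ (ν_w n + (1 − ν_b ν_w) ∂_b),
acting on ℚ[ν_b, ν_w] with ν_b = X 0, ν_w = X 1. -/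
noncomputable def Omega (n : ℕ) (P : MvPolynomial (Fin 2) ℚ) : MvPolynomial (Fin 2) ℚ :=
  let νb : MvPolynomial (Fin 2) ℚ := X 0
  let νw : MvPolynomial (Fin 2) ℚ := X 1
  let Q1 := (n : MvPolynomial (Fin 2) ℚ) * ((νw ^ 2 + νb) * P)
      + νw * (1 - νb * νw) * pderiv (0 : Fin 2) P + (1 - νb * νw) * pderiv (1 : Fin 2) P
  let Q2 := ((n : MvPolynomial (Fin 2) ℚ) + 1) * Q1 + νw * pderiv (1 : Fin 2) Q1
      - νb * pderiv (0 : Fin 2) Q1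
  let R1 := (n : MvPolynomial (Fin 2) ℚ) * (νw * P) + (1 - νb * νw) * pderiv (0 : Fin 2) P
  let R2 := ((n : MvPolynomial (Fin 2) ℚ) + 1) * (νw * R1) + (1 - νb * νw) * pderiv (0 : Fin 2) R1
  (2 / 3 : ℚ) • Q2 - R2

/- Each identity is checked pointwise (`MvPolynomial.funext`), so that `ring` works over `ℚ`
and can use the scalar `2 / 3`. -/

theorem Omega_one_X : Omega 1 (X 0) = 0 := by
  refine MvPolynomial.funext fun x => ?_
  simp [Omega, smul_eq_C_mul]
  ring

theorem Omega_three_one_add_X_pow_three : Omega 3 (1 + X 0 ^ 3) = 0 := by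
  refine MvPolynomial.funext fun x => ?_
  simp [Omega, smul_eq_C_mul]
  ring

theorem Omega_five_X_pow_five_add_two_mul_X_pow_two_add_X :
    Omega 5 (X 0 ^ 5 + 2 * X 0 ^ 2 + X 1) = 0 := by
  refine MvPolynomial.funext fun x => ?_
  simp [Omega, smul_eq_C_mul]
  ring

/-- explicit kernel elements Ω_1(ν_b) = 0, Ω_3(1 + ν_b³) = 0,
Ω_5(ν_b⁵ + 2ν_b² + ν_w) = 0; in particular for n ∈ {1,3,5} the operator Ω_n is
not injective on polynomials of total degree at most n. -/
theorem stmt_3 :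
    Omega 1 (X 0 : MvPolynomial (Fin 2) ℚ) = 0 ∧
    Omega 3 (1 + (X 0 : MvPolynomial (Fin 2) ℚ) ^ 3) = 0 ∧
    Omega 5 ((X 0 : MvPolynomial (Fin 2) ℚ) ^ 5 + 2 * (X 0) ^ 2 + X 1) = 0 ∧
    ∀ n ∈ ({1, 3, 5} : Set ℕ), ∃ P : MvPolynomial (Fin 2) ℚ,
      P ≠ 0 ∧ P.totalDegree ≤ n ∧ Omega n P = 0 := by
  refine ⟨Omega_one_X, Omega_three_one_add_X_pow_three,
    Omega_five_X_pow_five_add_two_mul_X_pow_two_add_X, ?_⟩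
  rintro n (rfl | rfl | rfl)
  · exact ⟨X 0, X_ne_zero 0, by simp, Omega_one_X⟩
  · refine ⟨1 + X 0 ^ 3, fun h => by simpa using congrArg (eval 0) h, ?_,
      Omega_three_one_add_X_pow_three⟩
    grw [totalDegree_add]
    simp
  · refine ⟨X 0 ^ 5 + 2 * X 0 ^ 2 + X 1, fun h => by simpa using congrArg (eval ![0, 1]) h, ?_,
      Omega_five_X_pow_five_add_two_mul_X_pow_two_add_X⟩
    grw [totalDegree_add, totalDegree_add, totalDegree_mul]
    simp

end Stmt3
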